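/- arXiv:2301.04428 — 5 statements merged into one kernel-verified Lean document; each statement's English description precedes it below -/
import Mathlib

section
/- In the Jordan plane J = k⟨x,y⟩ with relation [y,x] = -(1/2)x², every nonzero prime ideal of J contains the element x. -/
/-- The defining relation of the Jordan plane: `y*x = x*y - (1/2)*x^2`,
i.e. `[y,x] = -(1/2) x²`. -/
inductive JordanRel (k : Type*) [Field k] :
    FreeAlgebra k (Fin 2) → FreeAlgebra k (Fin 2) → Prop
  | rel : JordanRel k
      (FreeAlgebra.ι k (1 : Fin 2) * FreeAlgebra.ι k (0 : Fin 2))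
      (FreeAlgebra.ι k (0 : Fin 2) * FreeAlgebra.ι k (1 : Fin 2) -
        (2⁻¹ : k) • (FreeAlgebra.ι k (0 : Fin 2)) ^ 2)

/-- The Jordan plane `J = k⟨x,y : [y,x] = -(1/2)x²⟩`. -/
abbrev JordanPlane (k : Type*) [Field k] := RingQuot (JordanRel k)

/-- The generator `x` of the Jordan plane. -/
noncomputable def JordanPlane.x (k : Type*) [Field k] : JordanPlane k :=
  RingQuot.mkAlgHom k (JordanRel k) (FreeAlgebra.ι k (0 : Fin 2))

/-!
Since `y x - x y = -½ x²`, the map `p ↦ p x - x p` lowers the `y`-degree of the ordered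
monomials `xⁱ yʲ`, so iterating it on a nonzero element of `P` yields a nonzero element of `P`
commuting with `x`. The centralizer of `x` is `k[x]`: let `J` act on `k[t][s]` by `x ↦ s`,
`y ↦ -½ s (t + s ∂ₛ)`. The operator `v(t, s) ↦ s v(t + 1, s)` commutes with this action, so if
`p` commutes with `x` then `p · 1` is invariant under `t ↦ t + 1`, i.e. free of `t`; but
`yʲ · 1 = (-½)ʲ t (t + 1) ⋯ (t + j - 1) sʲ`, so the `t`-degree of `p · 1` is the `y`-degree of `p`.

Hence `P` contains some nonzero `g(x)`. As `y g(x) - g(x) y = -½ x² g'(x)`, the ideal of such `g`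
is stable under `x² d/dx`, and `x² g' - i x g` (with `xⁱ` the lowest term of `g`) has one term
fewer than `g`; so `P` contains a power of `x`. Finally `x J = J x`, so `x J xⁿ ⊆ P` whenever
`xⁿ⁺¹ ∈ P`, and primality gives `x ∈ P`.
-/

open Polynomial

namespace Polynomial

theorem card_support_X_mul {R : Type*} [Semiring R] (p : R[X]) :
    (X * p).support.card = p.support.card := by
  have : (X * p).support = p.support.map ⟨Nat.succ, Nat.succ_injective⟩ := by
    ext (_ | n) <;> simp [coeff_X_mul]
  rw [this, Finset.card_map]

theorem coeff_X_mul_derivative_sub_C_mul {R : Type*} [CommRing R] (g : R[X]) (a : R) (n : ℕ) :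
    (X * derivative g - C a * g).coeff n = (n - a) * g.coeff n := by
  cases n with
  | zero => simp
  | succ n => simp [coeff_X_mul, coeff_derivative]; ring

theorem support_X_mul_derivative_sub_C_mul {R : Type*} [CommRing R] [IsDomain R] [CharZero R]
    (g : R[X]) (n : ℕ) :
    (X * derivative g - C (n : R) * g).support = g.support.erase n := by
  ext m
  rw [Finset.mem_erase, mem_support_iff, mem_support_iff, coeff_X_mul_derivative_sub_C_mul,
    mul_ne_zero_iff, sub_ne_zero, Ne, Nat.cast_inj]

theorem exists_X_pow_mem_of_X_sq_mul_derivative_mem {K : Type*} [Field K] [CharZero K]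
    {I : Ideal K[X]} (hI : ∀ g ∈ I, X ^ 2 * derivative g ∈ I) {g : K[X]} (hg : g ∈ I)
    (hg0 : g ≠ 0) :
    ∃ i, X ^ i ∈ I := by
  induction hn : g.support.card using Nat.strong_induction_on generalizing g with
  | _ n ih =>
  by_cases hmono : g.support.card ≤ 1
  · obtain ⟨i, a, ha, rfl⟩ := card_support_eq_one.mp
      (le_antisymm hmono (Finset.card_pos.mpr (nonempty_support_iff.mpr hg0)))
    refine ⟨i, ?_⟩
    simpa [← mul_assoc, ← C_mul, ha] using I.mul_mem_left (C a⁻¹) hg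
  set i₀ := g.natTrailingDegree
  set h := X * (X * derivative g - C (i₀ : K) * g)
  have hh : h ∈ I := by
    have : h = X ^ 2 * derivative g - C (i₀ : K) * (X * g) := by ring
    exact this ▸ I.sub_mem (hI g hg) (I.mul_mem_left _ (I.mul_mem_left _ hg))
  have hcard : h.support.card = n - 1 := by
    rw [card_support_X_mul, support_X_mul_derivative_sub_C_mul,
      Finset.card_erase_of_mem (natTrailingDegree_mem_support_of_nonzero hg0), hn]
  refine ih _ (by omega) hh ?_ hcard
  intro h0
  rw [h0, support_zero, Finset.card_empty] at hcard
  omega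

theorem eq_C_eval_zero_of_comp_X_add_one_eq {R : Type*} [CommRing R] [IsDomain R]
    [CharZero R] {p : R[X]} (h : p.comp (X + 1) = p) : p = C (p.eval 0) := by
  have hn : ∀ n : ℕ, p.eval (n : R) = p.eval 0 := by
    intro n
    induction n with
    | zero => simp
    | succ n ih =>
      have h' := congrArg (eval (n : R)) h
      rw [eval_comp] at h'
      simpa [ih] using h'
  refine eq_of_infinite_eval_eq _ _ ((Set.infinite_range_of_injective Nat.cast_injective).mono ?_)
  rintro _ ⟨n, rfl⟩
  simp [hn]

theorem coeff_swap_map_C_mul_monomial {R : Type*} [CommSemiring R] (g r : R[X]) (i j : ℕ) :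
    (Bivariate.swap (g.map C * monomial j r)).coeff i = g * C (r.coeff i) * X ^ j := by
  rw [map_mul, Bivariate.swap_map_C, Bivariate.swap_monomial, coeff_C_mul, coeff_mul_C, coeff_map,
    mul_assoc]

end Polynomial

namespace JordanPlane

noncomputable def y (k : Type*) [Field k] : JordanPlane k :=
  RingQuot.mkAlgHom k (JordanRel k) (FreeAlgebra.ι k (1 : Fin 2))

variable {k : Type*} [Field k]

theorem y_mul_x : y k * x k = x k * y k - (2⁻¹ : k) • x k ^ 2 := by
  simpa [x, y] using RingQuot.mkAlgHom_rel k (JordanRel.rel (k := k))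

@[elab_as_elim]
theorem induction_on {motive : JordanPlane k → Prop} (p : JordanPlane k)
    (algebraMap : ∀ c : k, motive (algebraMap k _ c)) (x : motive (x k)) (y : motive (y k))
    (add : ∀ p q, motive p → motive q → motive (p + q))
    (mul : ∀ p q, motive p → motive q → motive (p * q)) : motive p := by
  obtain ⟨a, rfl⟩ := RingQuot.mkAlgHom_surjective k (JordanRel k) p
  induction a using FreeAlgebra.induction with
  | grade0 c => simpa using algebraMap c
  | grade1 i => fin_cases i <;> assumption
  | add a b ha hb => rw [map_add]; exact add _ _ ha hb
  | mul a b ha hb => rw [map_mul]; exact mul _ _ ha hb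

theorem y_mul_x_sub : y k * x k - x k * y k = (-2⁻¹ : k) • x k ^ 2 := by
  rw [y_mul_x]
  module

theorem x_mul_y : x k * y k = (y k + (2⁻¹ : k) • x k) * x k := by
  rw [add_mul, smul_mul_assoc, y_mul_x, ← pow_two, sub_add_cancel]

theorem exists_x_mul_eq_mul_x (r : JordanPlane k) : ∃ r', x k * r = r' * x k := by
  induction r using induction_on with
  | algebraMap c => exact ⟨_, (Algebra.commutes c (x k)).symm⟩
  | x => exact ⟨x k, rfl⟩
  | y => exact ⟨_, x_mul_y⟩
  | add p q hp hq =>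
    obtain ⟨p', hp⟩ := hp
    obtain ⟨q', hq⟩ := hq
    exact ⟨p' + q', by rw [mul_add, hp, hq, add_mul]⟩
  | mul p q hp hq =>
    obtain ⟨p', hp⟩ := hp
    obtain ⟨q', hq⟩ := hq
    exact ⟨p' * q', by rw [← mul_assoc, hp, mul_assoc, hq, mul_assoc]⟩

theorem y_mul_x_pow_sub (n : ℕ) :
    y k * x k ^ n - x k ^ n * y k = -((n : k) / 2) • x k ^ (n + 1) := by
  induction n with
  | zero => simp
  | succ n ih =>
    calc y k * x k ^ (n + 1) - x k ^ (n + 1) * y k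
        = (y k * x k ^ n - x k ^ n * y k) * x k + x k ^ n * (y k * x k - x k * y k) := by
          simp only [pow_succ, sub_mul, mul_sub, mul_assoc]; abel
      _ = -((n + 1 : ℕ) / 2 : k) • x k ^ (n + 1 + 1) := by
          rw [ih, y_mul_x_sub, smul_mul_assoc, mul_smul_comm, ← pow_succ, ← pow_add]
          push_cast
          module

theorem y_mul_aeval_sub (g : k[X]) :
    y k * aeval (x k) g - aeval (x k) g * y k =
      (-2⁻¹ : k) • aeval (x k) (X ^ 2 * derivative g) := by
  induction g using Polynomial.induction_on' with
  | add p q hp hq =>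
    simp only [map_add, mul_add, add_mul, smul_add, ← hp, ← hq]
    abel
  | monomial n a =>
    rw [aeval_monomial, ← Algebra.smul_def, mul_smul_comm, smul_mul_assoc, derivative_monomial]
    cases n with
    | zero => simp
    | succ n =>
      rw [pow_two, mul_assoc, X_mul_monomial, X_mul_monomial, aeval_monomial, ← Algebra.smul_def,
        Nat.add_sub_cancel]
      linear_combination (norm := module) a • y_mul_x_pow_sub (k := k) (n + 1)

theorem x_mem_of_x_pow_mem {P : TwoSidedIdeal (JordanPlane k)} (hP : P ≠ ⊤)
    (hprime : ∀ a b : JordanPlane k, (∀ r, a * r * b ∈ P) → a ∈ P ∨ b ∈ P) {n : ℕ}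
    (hn : x k ^ n ∈ P) : x k ∈ P := by
  induction n with
  | zero => exact absurd (P.eq_top (by simpa using hn)) hP
  | succ n ih =>
    refine (hprime (x k) (x k ^ n) fun r => ?_).elim id ih
    obtain ⟨r', hr⟩ := exists_x_mul_eq_mul_x r
    rw [hr, mul_assoc, ← pow_succ']
    exact P.mul_mem_left _ _ hn

theorem aeval_X_sq_mul_derivative_mem [NeZero (2 : k)] {P : TwoSidedIdeal (JordanPlane k)}
    {g : k[X]} (hg : aeval (x k) g ∈ P) : aeval (x k) (X ^ 2 * derivative g) ∈ P := by
  have h := P.sub_mem (P.mul_mem_left (y k) _ hg) (P.mul_mem_right _ (y k) hg)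
  rw [y_mul_aeval_sub, Algebra.smul_def] at h
  have h2 : (-2 : k) * -2⁻¹ = 1 := by field_simp
  have h3 := P.mul_mem_left (algebraMap k _ (-2)) _ h
  rwa [← mul_assoc, ← map_mul, h2, map_one, one_mul] at h3

theorem exists_x_pow_mem_of_aeval_mem [CharZero k] (P : TwoSidedIdeal (JordanPlane k)) {g : k[X]}
    (hg : aeval (x k) g ∈ P) (hg0 : g ≠ 0) : ∃ n, x k ^ n ∈ P := by
  let I := (P.comap (aeval (x k) : k[X] →ₐ[k] JordanPlane k)).asIdeal
  have hI : ∀ g ∈ I, X ^ 2 * derivative g ∈ I := by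
    simpa [I, TwoSidedIdeal.mem_comap] using
      fun g => aeval_X_sq_mul_derivative_mem (P := P) (g := g)
  obtain ⟨n, hn⟩ := exists_X_pow_mem_of_X_sq_mul_derivative_mem hI (g := g)
    (by simpa [I, TwoSidedIdeal.mem_comap]) hg0
  exact ⟨n, by simpa [I, TwoSidedIdeal.mem_comap] using hn⟩

variable (k) in
noncomputable def yDegreeLE (n : ℕ) : Submodule k (JordanPlane k) :=
  Submodule.span k {p | ∃ i, ∃ j ≤ n, p = x k ^ i * y k ^ j}

theorem x_pow_mul_y_pow_mem_yDegreeLE (i : ℕ) {j n : ℕ} (h : j ≤ n) :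
    x k ^ i * y k ^ j ∈ yDegreeLE k n :=
  Submodule.subset_span ⟨i, j, h, rfl⟩

theorem x_pow_mem_yDegreeLE (i n : ℕ) : x k ^ i ∈ yDegreeLE k n := by
  simpa using x_pow_mul_y_pow_mem_yDegreeLE i (Nat.zero_le n)

theorem yDegreeLE_mono : Monotone (yDegreeLE k) := fun _ _ hmn =>
  Submodule.span_mono <| by rintro _ ⟨i, j, hj, rfl⟩; exact ⟨i, j, hj.trans hmn, rfl⟩

theorem apply_mem_yDegreeLE {L : JordanPlane k →ₗ[k] JordanPlane k} {m n : ℕ}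
    (hL : ∀ i j, j ≤ m → L (x k ^ i * y k ^ j) ∈ yDegreeLE k n) {p : JordanPlane k}
    (hp : p ∈ yDegreeLE k m) : L p ∈ yDegreeLE k n :=
  (Submodule.span_le (p := (yDegreeLE k n).comap L)).mpr
    (by rintro _ ⟨i, j, hj, rfl⟩; exact hL i j hj) hp

theorem x_pow_mul_mem_yDegreeLE (a : ℕ) {n : ℕ} {p : JordanPlane k} (hp : p ∈ yDegreeLE k n) :
    x k ^ a * p ∈ yDegreeLE k n :=
  apply_mem_yDegreeLE (L := LinearMap.mulLeft k (x k ^ a)) (fun i _ hj => by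
    simpa [← mul_assoc, ← pow_add] using x_pow_mul_y_pow_mem_yDegreeLE (a + i) hj) hp

theorem y_mul_mem_yDegreeLE {n : ℕ} {p : JordanPlane k} (hp : p ∈ yDegreeLE k n) :
    y k * p ∈ yDegreeLE k (n + 1) :=
  apply_mem_yDegreeLE (L := LinearMap.mulLeft k (y k)) (fun i j hj => by
    have h : y k * (x k ^ i * y k ^ j) =
        x k ^ i * y k ^ (j + 1) + -((i : k) / 2) • (x k ^ (i + 1) * y k ^ j) := by
      rw [← smul_mul_assoc, ← y_mul_x_pow_sub, pow_succ', sub_mul]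
      noncomm_ring
    rw [LinearMap.mulLeft_apply, h]
    exact add_mem (x_pow_mul_y_pow_mem_yDegreeLE i (by omega)) (Submodule.smul_mem _ _
      (yDegreeLE_mono (Nat.le_succ n) (x_pow_mul_y_pow_mem_yDegreeLE (i + 1) hj)))) hp

theorem exists_mem_yDegreeLE (p : JordanPlane k) : ∃ n, p ∈ yDegreeLE k n := by
  suffices h : ∃ d, ∀ n q, q ∈ yDegreeLE k n → p * q ∈ yDegreeLE k (n + d) by
    obtain ⟨d, hd⟩ := h
    exact ⟨d, by simpa using hd 0 1 (by simpa using x_pow_mem_yDegreeLE (k := k) 0 0)⟩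
  induction p using induction_on with
  | algebraMap c =>
    exact ⟨0, fun n q hq => by simpa [← Algebra.smul_def] using Submodule.smul_mem _ c hq⟩
  | x => exact ⟨0, fun n q hq => by simpa using x_pow_mul_mem_yDegreeLE 1 hq⟩
  | y => exact ⟨1, fun n q hq => y_mul_mem_yDegreeLE hq⟩
  | add p q hp hq =>
    obtain ⟨d, hp⟩ := hp
    obtain ⟨e, hq⟩ := hq
    refine ⟨max d e, fun n r hr => ?_⟩
    rw [add_mul]
    exact add_mem (yDegreeLE_mono (by omega) (hp n r hr))
      (yDegreeLE_mono (by omega) (hq n r hr))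
  | mul p q hp hq =>
    obtain ⟨d, hp⟩ := hp
    obtain ⟨e, hq⟩ := hq
    exact ⟨e + d, fun n r hr => by simpa [mul_assoc, add_assoc] using hp _ _ (hq n r hr)⟩

theorem y_pow_succ_mul_x_sub_mem_yDegreeLE (j : ℕ) :
    y k ^ (j + 1) * x k - x k * y k ^ (j + 1) ∈ yDegreeLE k j := by
  induction j with
  | zero =>
    rw [zero_add, pow_one, y_mul_x_sub]
    exact Submodule.smul_mem _ _ (x_pow_mem_yDegreeLE 2 0)
  | succ j ih =>
    have h : y k ^ (j + 2) * x k - x k * y k ^ (j + 2) =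
        y k * (y k ^ (j + 1) * x k - x k * y k ^ (j + 1)) +
          (-2⁻¹ : k) • (x k ^ 2 * y k ^ (j + 1)) := by
      rw [← smul_mul_assoc, ← y_mul_x_sub, pow_succ' _ (j + 1), mul_sub, sub_mul]
      simp only [mul_assoc]
      abel
    rw [h]
    exact add_mem (y_mul_mem_yDegreeLE ih)
      (Submodule.smul_mem _ _ (x_pow_mul_y_pow_mem_yDegreeLE 2 le_rfl))

theorem mul_x_sub_x_mul_mem_yDegreeLE {n : ℕ} {p : JordanPlane k}
    (hp : p ∈ yDegreeLE k (n + 1)) :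
    p * x k - x k * p ∈ yDegreeLE k n := by
  refine apply_mem_yDegreeLE (L := LinearMap.mulRight k (x k) - LinearMap.mulLeft k (x k))
    (fun i j hj => ?_) hp
  have h : x k ^ i * y k ^ j * x k - x k * (x k ^ i * y k ^ j) =
      x k ^ i * (y k ^ j * x k - x k * y k ^ j) := by
    rw [← mul_assoc, ← pow_succ', pow_succ, mul_sub, mul_assoc, mul_assoc]
  simp only [LinearMap.sub_apply, LinearMap.mulRight_apply, LinearMap.mulLeft_apply, h]
  cases j with
  | zero => simp
  | succ j =>
    exact x_pow_mul_mem_yDegreeLE i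
      (yDegreeLE_mono (by omega) (y_pow_succ_mul_x_sub_mem_yDegreeLE j))

theorem mul_x_eq_x_mul_of_mem_yDegreeLE_zero {p : JordanPlane k} (hp : p ∈ yDegreeLE k 0) :
    p * x k = x k * p := by
  have := (Submodule.span_le (p := LinearMap.ker
    (LinearMap.mulRight k (x k) - LinearMap.mulLeft k (x k)))).mpr ?_ hp
  · simpa [sub_eq_zero] using this
  rintro _ ⟨i, j, hj, rfl⟩
  obtain rfl : j = 0 := by omega
  simp [← pow_succ, ← pow_succ']

theorem exists_mem_ne_zero_mul_x_eq_x_mul (P : TwoSidedIdeal (JordanPlane k))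
    {p : JordanPlane k} (hpP : p ∈ P) (hp0 : p ≠ 0) : ∃ q ∈ P, q ≠ 0 ∧ q * x k = x k * q := by
  obtain ⟨n, hn⟩ := exists_mem_yDegreeLE p
  induction n generalizing p with
  | zero => exact ⟨p, hpP, hp0, mul_x_eq_x_mul_of_mem_yDegreeLE_zero hn⟩
  | succ n ih =>
    by_cases hc : p * x k = x k * p
    · exact ⟨p, hpP, hp0, hc⟩
    · exact ih (P.sub_mem (P.mul_mem_right _ _ hpP) (P.mul_mem_left _ _ hpP))
        (sub_ne_zero.mpr hc) (mul_x_sub_x_mul_mem_yDegreeLE hn)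

/-- `∑ⱼ fⱼ(x) yʲ` for `f = ∑ⱼ fⱼ Yʲ ∈ k[X][Y]`. -/
noncomputable def pbw (f : k[X][X]) : JordanPlane k :=
  f.eval₂ (aeval (x k)).toRingHom (y k)

theorem exists_pbw_eq (p : JordanPlane k) : ∃ f, pbw f = p := by
  obtain ⟨n, hn⟩ := exists_mem_yDegreeLE p
  induction hn using Submodule.span_induction with
  | mem _ h =>
    obtain ⟨i, j, -, rfl⟩ := h
    exact ⟨monomial j (X ^ i), by simp [pbw]⟩
  | zero => exact ⟨0, by simp [pbw]⟩
  | add _ _ _ _ hp hq =>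
    obtain ⟨f, rfl⟩ := hp
    obtain ⟨g, rfl⟩ := hq
    exact ⟨f + g, eval₂_add _ _⟩
  | smul c _ _ hp =>
    obtain ⟨f, rfl⟩ := hp
    refine ⟨C c • f, ?_⟩
    rw [pbw, eval₂_smul, pbw, Algebra.smul_def]
    simp

variable (k) in
-- `k[t][s]` is encoded as `k[X][X]`, with `s = X` and `t = C X`.
noncomputable def xOp : Module.End k k[X][X] := Algebra.lmul k _ X

variable (k) in
noncomputable def yOp : Module.End k k[X][X] :=
  (-2⁻¹ : k) • (Algebra.lmul k _ (C X * X) +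
    Algebra.lmul k _ (X ^ 2) ∘ₗ (derivative : k[X][X] →ₗ[k[X]] k[X][X]).restrictScalars k)

theorem xOp_apply (v : k[X][X]) : xOp k v = X * v := rfl

theorem yOp_apply (v : k[X][X]) :
    yOp k v = (-2⁻¹ : k) • (C X * X * v + X ^ 2 * derivative v) := rfl

theorem yOp_mul_xOp : yOp k * xOp k = xOp k * yOp k - (2⁻¹ : k) • xOp k ^ 2 := by
  ext1 v
  simp only [Module.End.mul_apply, LinearMap.sub_apply, LinearMap.smul_apply, pow_two, yOp_apply,
    xOp_apply, derivative_mul, derivative_X]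
  simp only [Algebra.smul_def, map_neg]
  ring

variable (k) in
noncomputable def rep : JordanPlane k →ₐ[k] Module.End k k[X][X] :=
  RingQuot.liftAlgHom k ⟨FreeAlgebra.lift k ![xOp k, yOp k], by
    rintro _ _ ⟨⟩
    simpa using yOp_mul_xOp⟩

theorem rep_x : rep k (x k) = xOp k := by
  simp [rep, x]

theorem rep_y : rep k (y k) = yOp k := by
  simp [rep, y]

variable (k) in
noncomputable def shift : k[X][X] →ₐ[k] k[X][X] := mapAlgHom (aeval (X + 1))

theorem shift_X : shift k X = X := by
  simp [shift]

theorem shift_C (q : k[X]) : shift k (C q) = C (q.comp (X + 1)) := by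
  simp [shift, comp_eq_aeval]

theorem derivative_shift (v : k[X][X]) : derivative (shift k v) = shift k (derivative v) := by
  simp [shift, coe_mapAlgHom, derivative_map]

theorem rep_apply_X_mul_shift (p : JordanPlane k) (v : k[X][X]) :
    rep k p (X * shift k v) = X * shift k (rep k p v) := by
  induction p using induction_on generalizing v with
  | algebraMap c => simp [Algebra.smul_def, mul_left_comm, shift_C]
  | x => simp [rep_x, xOp_apply, shift_X]
  | y =>
    simp only [rep_y, yOp_apply, map_add, map_mul, map_pow, shift_X, shift_C, derivative_mul,
      derivative_X, derivative_shift, X_comp, Algebra.smul_def, map_neg, AlgHom.commutes, C_1]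
    ring
  | add p q hp hq => simp [hp, hq, mul_add]
  | mul p q hp hq => simp [hp, hq]

theorem shift_rep_apply_one_of_mul_x_eq {p : JordanPlane k} (h : p * x k = x k * p) :
    shift k (rep k p 1) = rep k p 1 := by
  have h1 := rep_apply_X_mul_shift p 1
  rw [map_one, mul_one] at h1
  have h2 : rep k p X = X * rep k p 1 := by
    simpa [rep_x, xOp_apply] using congrArg (fun q => rep k q 1) h
  exact mul_left_cancel₀ X_ne_zero (h1.symm.trans h2)

theorem eq_map_C_of_shift_eq [CharZero k] {v : k[X][X]} (h : shift k v = v) :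
    v = (v.map (evalRingHom 0)).map C := by
  ext1 i
  rw [coeff_map, coeff_map, coe_evalRingHom]
  apply eq_C_eval_zero_of_comp_X_add_one_eq
  simpa [shift, coe_mapAlgHom, comp_eq_aeval] using congrArg (coeff · i) h

theorem yOp_monomial (m : ℕ) (r : k[X]) :
    yOp k (monomial m r) = monomial (m + 1) ((-2⁻¹ : k) • ((X + (m : k[X])) * r)) := by
  have hE : X * derivative (monomial m r) = monomial m (r * m) := by
    cases m <;> simp [X_mul_monomial]
  calc yOp k (monomial m r)
      = (-2⁻¹ : k) • (X * (C X * monomial m r + X * derivative (monomial m r))) := by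
        rw [yOp_apply]; congr 1; ring
    _ = _ := by
        rw [hE, C_mul_monomial, ← map_add, X_mul_monomial, smul_monomial]
        congr 2
        ring

theorem yOp_pow_apply_one (j : ℕ) :
    (yOp k ^ j) 1 = monomial j ((-2⁻¹ : k) ^ j • ascPochhammer k j) := by
  induction j with
  | zero => simp
  | succ j ih =>
    rw [pow_succ', Module.End.mul_apply, ih, yOp_monomial, ascPochhammer_succ_right]
    congr 1
    simp only [Algebra.smul_def, map_pow]
    ring

theorem rep_aeval_apply (g : k[X]) (v : k[X][X]) : rep k (aeval (x k) g) v = g.map C * v := by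
  rw [← aeval_algHom_apply, rep_x, xOp, aeval_algHom_apply, aeval_X_left_eq_map]
  rfl

theorem rep_pbw_apply_one (f : k[X][X]) :
    rep k (pbw f) 1 =
      ∑ j ∈ f.support, (f.coeff j).map C * monomial j ((-2⁻¹ : k) ^ j • ascPochhammer k j) := by
  rw [pbw, eval₂_eq_sum, Polynomial.sum_def, map_sum, LinearMap.sum_apply]
  refine Finset.sum_congr rfl fun j _ => ?_
  rw [map_mul, map_pow, rep_y, Module.End.mul_apply, yOp_pow_apply_one]
  exact rep_aeval_apply _ _

theorem coeff_swap_rep_pbw_apply_one (f : k[X][X]) :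
    (Bivariate.swap (rep k (pbw f) 1)).coeff f.natDegree =
      f.leadingCoeff * C ((-2⁻¹ : k) ^ f.natDegree) * X ^ f.natDegree := by
  rw [rep_pbw_apply_one, map_sum, finsetSum_coeff, Finset.sum_eq_single f.natDegree]
  · have hP : (ascPochhammer k f.natDegree).coeff f.natDegree = 1 := by
      simpa using (monic_ascPochhammer k f.natDegree).coeff_natDegree
    rw [coeff_swap_map_C_mul_monomial, coeff_smul, hP, smul_eq_mul, mul_one]
    rfl
  · intro j hj hjn
    rw [coeff_swap_map_C_mul_monomial, coeff_smul,
      coeff_eq_zero_of_natDegree_lt (p := ascPochhammer k j), smul_zero, C_0, mul_zero, zero_mul]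
    rw [ascPochhammer_natDegree]
    exact lt_of_le_of_ne (le_natDegree_of_mem_supp j hj) hjn
  · intro hn
    rw [notMem_support_iff.mp hn, Polynomial.map_zero, zero_mul, map_zero, coeff_zero]

theorem natDegree_eq_zero_of_pbw_mul_x_eq [CharZero k] {f : k[X][X]}
    (h : pbw f * x k = x k * pbw f) : f.natDegree = 0 := by
  by_contra hn
  have hf : f ≠ 0 := by rintro rfl; simp at hn
  have hcoeff := coeff_swap_rep_pbw_apply_one f
  rw [eq_map_C_of_shift_eq (shift_rep_apply_one_of_mul_x_eq h), Bivariate.swap_map_C, coeff_C,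
    if_neg hn] at hcoeff
  exact mul_ne_zero (mul_ne_zero (leadingCoeff_ne_zero.mpr hf) (by simp))
    (pow_ne_zero _ X_ne_zero) hcoeff.symm

theorem exists_aeval_eq_of_mul_x_eq [CharZero k] {p : JordanPlane k} (h : p * x k = x k * p) :
    ∃ g : k[X], aeval (x k) g = p := by
  obtain ⟨f, rfl⟩ := exists_pbw_eq p
  refine ⟨f.coeff 0, ?_⟩
  conv_rhs => rw [eq_C_of_natDegree_eq_zero (natDegree_eq_zero_of_pbw_mul_x_eq h)]
  simp [pbw]

end JordanPlane

theorem jordanPlane_prime_contains_x_general (k : Type*) [Field k] [CharZero k]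
    (P : TwoSidedIdeal (JordanPlane k))
    (hproper : P ≠ ⊤)
    (hprime : ∀ a b : JordanPlane k,
      (∀ r : JordanPlane k, a * r * b ∈ P) → a ∈ P ∨ b ∈ P)
    (hne : P ≠ ⊥) :
    JordanPlane.x k ∈ P := by
  obtain ⟨p, hpP, hp0⟩ : ∃ p ∈ P, p ≠ 0 := by
    by_contra! h
    exact hne (TwoSidedIdeal.ext fun p =>
      ⟨h p, fun hp => (TwoSidedIdeal.mem_bot _).mp hp ▸ P.zero_mem⟩)
  obtain ⟨q, hqP, hq0, hqx⟩ := JordanPlane.exists_mem_ne_zero_mul_x_eq_x_mul P hpP hp0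
  obtain ⟨g, rfl⟩ := JordanPlane.exists_aeval_eq_of_mul_x_eq hqx
  obtain ⟨n, hn⟩ := JordanPlane.exists_x_pow_mem_of_aeval_mem P hqP (by rintro rfl; simp at hq0)
  exact JordanPlane.x_mem_of_x_pow_mem hproper hprime hn

/-- Every nonzero (two-sided) prime ideal of the Jordan plane contains `x`. -/
theorem jordanPlane_prime_contains_x (k : Type*) [Field k] [CharZero k]
    [IsAlgClosed k] (P : TwoSidedIdeal (JordanPlane k))
    (hproper : P ≠ ⊤)
    (hprime : ∀ a b : JordanPlane k,
      (∀ r : JordanPlane k, a * r * b ∈ P) → a ∈ P ∨ b ∈ P)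
    (hne : P ≠ ⊥) :
    JordanPlane.x k ∈ P :=
  jordanPlane_prime_contains_x_general k P hproper hprime hne
end

section
/- Let R be a commutative ring containing ℚ, δ a derivation of R, and I an ideal of R with δ(I) ⊆ I. Then the radical √I also satisfies δ(√I) ⊆ √I. -/
/-- If `R` is a commutative ring containing `ℚ`, `δ` a derivation of `R`, and `I`
an ideal with `δ(I) ⊆ I`, then the radical `√I` also satisfies `δ(√I) ⊆ √I`. -/
theorem derivation_radical_invariant {R : Type*} [CommRing R] [Algebra ℚ R]
    (δ : Derivation ℚ R R) (I : Ideal R) (hI : ∀ a ∈ I, δ a ∈ I) :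
    ∀ a ∈ I.radical, δ a ∈ I.radical := by
  -- division by positive naturals inside I
  have div : ∀ (m : ℕ) (x : R), 0 < m → m • x ∈ I → x ∈ I := by
    intro m x hm hmx
    have hx : ((m : ℚ)⁻¹ • (m • x) : R) = x := by
      rw [← Nat.cast_smul_eq_nsmul ℚ, smul_smul,
        inv_mul_cancel₀ (by exact_mod_cast hm.ne')]
      simp
    rw [← hx, Algebra.smul_def]
    exact I.mul_mem_left _ hmx
  rintro a ⟨n, hn⟩
  -- key step
  have step : ∀ (m j : ℕ), a ^ (m+1) * δ a ^ j ∈ I → a ^ m * δ a ^ (j+2) ∈ I := by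
    intro m j hx
    have hd : δ a * δ (a ^ (m+1) * δ a ^ j) ∈ I := I.mul_mem_left _ (hI _ hx)
    have hid : δ a * δ (a ^ (m+1) * δ a ^ j)
        = j • (δ (δ a) * (a ^ (m+1) * δ a ^ j)) + (m+1) • (a ^ m * δ a ^ (j+2)) := by
      cases j with
      | zero =>
          simp only [pow_zero, mul_one, Derivation.leibniz_pow, Nat.add_sub_cancel,
            smul_eq_mul, nsmul_eq_mul, Nat.cast_add, Nat.cast_one, zero_smul, zero_add,
            Nat.cast_zero, zero_mul]
          ring
      | succ j' =>
          simp only [Derivation.leibniz, Derivation.leibniz_pow, Nat.add_sub_cancel,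
            smul_eq_mul, smul_add, nsmul_eq_mul, Nat.cast_add, Nat.cast_one]
          ring
    have h2 : j • (δ (δ a) * (a ^ (m+1) * δ a ^ j)) ∈ I :=
      nsmul_mem (I.mul_mem_left _ hx) j
    have h3 := I.sub_mem (hid ▸ hd) h2
    have h4 : (m+1) • (a ^ m * δ a ^ (j+2)) ∈ I := by simpa using h3
    exact div (m+1) _ m.succ_pos h4
  have key : ∀ k, k ≤ n → a ^ (n - k) * δ a ^ (2 * k) ∈ I := by
    intro k
    induction k with
    | zero => intro _; simpa using hn
    | succ k ih =>
        intro hk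
        have hk' : k ≤ n := Nat.le_of_succ_le hk
        have hx := ih hk'
        have he : n - k = (n - (k+1)) + 1 := by omega
        rw [he] at hx
        have := step _ _ hx
        have he2 : 2 * (k+1) = 2 * k + 2 := by ring
        rw [he2]
        exact this
  exact ⟨2 * n, by simpa using key n le_rfl⟩
end

section
/- Let R be a noetherian ring, δ a derivation of R, and T = R[α; δ] the differential operator ring. If δ is not an inner derivation of R and R has no proper nonzero δ-invariant ideal, then T is a simple ring. -/
/-!
Let `J ≠ 0` be an ideal of `T` and `n` the least degree in `α` of a nonzero element of `J`.
The coefficients of `α ^ n` in the elements of `J` of degree `≤ n` form a two-sided ideal of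
`R`.
It is `δ`-invariant, since the coefficients of `α t - t α` are the `δ`-images of those of `t`,
and nonzero by minimality of `n`, so it contains `1`: `J` has an element `p = α ^ n + ⋯`.
If `n = 0` then `p = 1`. Otherwise `p ι(r) - ι(r) p ∈ J` has degree `< n`, so it vanishes, and
its coefficient of `α ^ (n - 1)` is `n δ(r) + b r - r b`, where `b` is that of `p`. Dividing by
`n` makes `δ` inner.
-/

namespace DiffOpRing

variable {R T : Type*} [Ring R] [Ring T] {ι : R →+* T} {α : T}

variable (ι α) in
noncomputable def ofCoeff : (ℕ →₀ R) →+ T :=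
  Finsupp.liftAddHom fun n => (AddMonoidHom.mulRight (α ^ n)).comp ι.toAddMonoidHom

lemma ofCoeff_apply (f : ℕ →₀ R) : ofCoeff ι α f = f.sum fun n r => ι r * α ^ n :=
  Finsupp.liftAddHom_apply _ _

@[simp]
lemma ofCoeff_single (n : ℕ) (r : R) : ofCoeff ι α (Finsupp.single n r) = ι r * α ^ n :=
  Finsupp.liftAddHom_apply_single _ _ _

lemma iota_mul_ofCoeff (c : R) (f : ℕ →₀ R) :
    ι c * ofCoeff ι α f = ofCoeff ι α (f.mapRange (c * ·) (mul_zero c)) := by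
  induction f using Finsupp.induction_linear with
  | zero => simp
  | add f g hf hg => rw [map_add, mul_add, hf, hg, Finsupp.mapRange_add (mul_add c), map_add]
  | single n r => simp only [Finsupp.mapRange_single, ofCoeff_single, map_mul, mul_assoc]

lemma ofCoeff_mul_alpha (f : ℕ →₀ R) :
    ofCoeff ι α f * α = ofCoeff ι α (f.mapDomain Nat.succ) := by
  induction f using Finsupp.induction_linear with
  | zero => simp
  | add f g hf hg => rw [map_add, add_mul, hf, hg, Finsupp.mapDomain_add, map_add]
  | single n r => simp [mul_assoc, pow_succ]

lemma alpha_mul_ofCoeff_sub {δ : R →+ R} (hOre : ∀ r : R, α * ι r = ι r * α + ι (δ r))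
    (f : ℕ →₀ R) :
    α * ofCoeff ι α f - ofCoeff ι α f * α = ofCoeff ι α (f.mapRange δ δ.map_zero) := by
  induction f using Finsupp.induction_linear with
  | zero => simp
  | add f g hf hg =>
    rw [Finsupp.mapRange_add (map_add δ), map_add, map_add, ← hf, ← hg]
    noncomm_ring
  | single n r =>
    simp only [ofCoeff_single, Finsupp.mapRange_single]
    rw [← mul_assoc, hOre, add_mul, mul_assoc, ← pow_succ', mul_assoc, ← pow_succ]
    abel

variable (hFree : ∀ t : T, ∃! f : ℕ →₀ R, t = f.sum fun n r => ι r * α ^ n)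

include hFree in
lemma ofCoeff_bijective : Function.Bijective (ofCoeff ι α) := by
  refine ⟨fun f g h => (hFree _).unique (h.symm.trans (ofCoeff_apply f)) (ofCoeff_apply g),
    fun t => ?_⟩
  obtain ⟨f, hf, -⟩ := hFree t
  exact ⟨f, (ofCoeff_apply f).trans hf.symm⟩

noncomputable def coeff : T ≃+ (ℕ →₀ R) :=
  (AddEquiv.ofBijective (ofCoeff ι α) (ofCoeff_bijective hFree)).symm

lemma ofCoeff_coeff (t : T) : ofCoeff ι α (coeff hFree t) = t :=
  (AddEquiv.ofBijective _ (ofCoeff_bijective hFree)).apply_symm_apply t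

lemma coeff_ofCoeff (f : ℕ →₀ R) : coeff hFree (ofCoeff ι α f) = f :=
  (AddEquiv.ofBijective _ (ofCoeff_bijective hFree)).symm_apply_apply f

lemma coeff_iota_mul_pow (r : R) (n : ℕ) :
    coeff hFree (ι r * α ^ n) = Finsupp.single n r := by
  rw [← ofCoeff_single, coeff_ofCoeff]

lemma coeff_iota_mul (c : R) (t : T) (k : ℕ) :
    coeff hFree (ι c * t) k = c * coeff hFree t k := by
  rw [← ofCoeff_coeff hFree t, iota_mul_ofCoeff, coeff_ofCoeff, coeff_ofCoeff,
    Finsupp.mapRange_apply]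

lemma coeff_mul_alpha_succ (t : T) (k : ℕ) :
    coeff hFree (t * α) (k + 1) = coeff hFree t k := by
  rw [← ofCoeff_coeff hFree t, ofCoeff_mul_alpha, coeff_ofCoeff, coeff_ofCoeff,
    Finsupp.mapDomain_apply Nat.succ_injective]

lemma coeff_alpha_mul_sub {δ : R →+ R} (hOre : ∀ r : R, α * ι r = ι r * α + ι (δ r))
    (t : T) (k : ℕ) : coeff hFree (α * t - t * α) k = δ (coeff hFree t k) := by
  rw [← ofCoeff_coeff hFree t, alpha_mul_ofCoeff_sub hOre, coeff_ofCoeff, coeff_ofCoeff,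
    Finsupp.mapRange_apply]

def degLT (n : ℕ) : AddSubgroup T where
  carrier := {t | ∀ k, n ≤ k → coeff hFree t k = 0}
  zero_mem' _ _ := by simp
  add_mem' ha hb k hk := by simp [ha k hk, hb k hk]
  neg_mem' ha k hk := by simp [ha k hk]

lemma mem_degLT {n : ℕ} {t : T} :
    t ∈ degLT hFree n ↔ ∀ k, n ≤ k → coeff hFree t k = 0 :=
  Iff.rfl

lemma degLT_mono : Monotone (degLT hFree) :=
  fun _ _ hnm _ ht k hk => ht k (hnm.trans hk)

lemma degLT_zero : degLT hFree 0 = ⊥ := by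
  refine eq_bot_iff.2 fun t ht => (AddSubgroup.mem_bot).2 ?_
  exact (coeff hFree).map_eq_zero_iff.1 (Finsupp.ext fun k => ht k k.zero_le)

lemma exists_mem_degLT (t : T) : ∃ n, t ∈ degLT hFree n := by
  obtain ⟨n, hn⟩ := (coeff hFree t).support.exists_nat_subset_range
  exact ⟨n, fun k hk => Finsupp.notMem_support_iff.1 fun hk' =>
    (Finset.mem_range.1 (hn hk')).not_ge hk⟩

lemma exists_minimal_degLT {J : TwoSidedIdeal T} (hJ : J ≠ ⊥) :
    ∃ n, (∃ t ∈ J, t ∈ degLT hFree (n + 1) ∧ t ≠ 0) ∧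
      ∀ t ∈ J, t ∈ degLT hFree n → t = 0 := by
  classical
  have hP : ∃ k, ∃ t ∈ J, t ∈ degLT hFree k ∧ t ≠ 0 := by
    obtain ⟨t, htJ, ht0⟩ : ∃ t ∈ J, t ≠ 0 := by
      by_contra! h
      exact hJ (TwoSidedIdeal.ext fun t => ⟨fun ht => h t ht, fun ht => ht ▸ J.zero_mem⟩)
    obtain ⟨k, hk⟩ := exists_mem_degLT hFree t
    exact ⟨k, t, htJ, hk, ht0⟩
  obtain ⟨n, hn⟩ : ∃ n, Nat.find hP = n + 1 := Nat.exists_eq_succ_of_ne_zero fun h0 => by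
    obtain ⟨t, -, ht, ht0⟩ := h0 ▸ Nat.find_spec hP
    rw [degLT_zero, AddSubgroup.mem_bot] at ht
    exact ht0 ht
  exact ⟨n, hn ▸ Nat.find_spec hP, fun t htJ ht => by_contra fun ht0 =>
    Nat.find_min hP (hn ▸ n.lt_succ_self) ⟨t, htJ, ht, ht0⟩⟩

lemma sub_iota_mul_pow_mem_degLT_iff {t : T} {x : R} {n : ℕ} :
    t - ι x * α ^ n ∈ degLT hFree n ↔ t ∈ degLT hFree (n + 1) ∧ coeff hFree t n = x := by
  simp only [mem_degLT, map_sub, coeff_iota_mul_pow, Finsupp.sub_apply]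
  constructor
  · intro h
    refine ⟨fun k hk => ?_, sub_eq_zero.1 (by simpa using h n le_rfl)⟩
    simpa [Finsupp.single_eq_of_ne (show k ≠ n by omega)] using h k (by omega)
  · rintro ⟨ht, rfl⟩ k hk
    rcases hk.eq_or_lt with rfl | hk
    · simp
    · simp [ht k hk, Finsupp.single_eq_of_ne hk.ne']

lemma iota_mul_pow_mem_degLT (r : R) (n : ℕ) : ι r * α ^ n ∈ degLT hFree (n + 1) :=
  (sub_iota_mul_pow_mem_degLT_iff hFree).1 (by rw [sub_self]; exact zero_mem _) |>.1

lemma iota_mul_mem_degLT (c : R) {n : ℕ} {t : T} (ht : t ∈ degLT hFree n) :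
    ι c * t ∈ degLT hFree n := fun k hk => by
  rw [coeff_iota_mul, ht k hk, mul_zero]

lemma mul_alpha_mem_degLT {n : ℕ} {t : T} (ht : t ∈ degLT hFree n) :
    t * α ∈ degLT hFree (n + 1) := fun k hk => by
  obtain ⟨k, rfl⟩ := Nat.exists_eq_add_of_le' (n.succ_pos.trans_le hk)
  rw [coeff_mul_alpha_succ, ht k (by omega)]

variable {δ : R →+ R} (hOre : ∀ r : R, α * ι r = ι r * α + ι (δ r))
include hOre

lemma alpha_mul_sub_mem_degLT {n : ℕ} {t : T} (ht : t ∈ degLT hFree n) :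
    α * t - t * α ∈ degLT hFree n := fun k hk => by
  rw [coeff_alpha_mul_sub hFree hOre, ht k hk, map_zero]

lemma alpha_mul_mem_degLT {n : ℕ} {t : T} (ht : t ∈ degLT hFree n) :
    α * t ∈ degLT hFree (n + 1) := by
  simpa using add_mem (degLT_mono hFree n.le_succ (alpha_mul_sub_mem_degLT hFree hOre ht))
    (mul_alpha_mem_degLT hFree ht)

lemma alpha_mul_iota_mul_pow (r : R) (n : ℕ) :
    α * (ι r * α ^ n) = ι r * α ^ (n + 1) + ι (δ r) * α ^ n := by
  rw [← mul_assoc, hOre, add_mul, mul_assoc, ← pow_succ']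

lemma alpha_pow_succ_mul_iota_sub_mem_degLT (r : R) (n : ℕ) :
    α ^ (n + 1) * ι r - ι r * α ^ (n + 1) - (n + 1) • (ι (δ r) * α ^ n) ∈
      degLT hFree n := by
  induction n with
  | zero => simp [hOre]
  | succ n ih =>
    convert add_mem (alpha_mul_mem_degLT hFree hOre ih)
      (nsmul_mem (iota_mul_pow_mem_degLT hFree (δ (δ r)) n) (n + 1)) using 1
    rw [mul_sub, mul_sub, mul_smul_comm, ← mul_assoc, ← pow_succ', alpha_mul_iota_mul_pow hOre,
      alpha_mul_iota_mul_pow hOre]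
    simp only [succ_nsmul, smul_add]
    abel

lemma alpha_pow_mul_iota_sub_mem_degLT (r : R) (n : ℕ) :
    α ^ n * ι r - ι r * α ^ n ∈ degLT hFree n := by
  cases n with
  | zero => simp
  | succ n =>
    simpa using add_mem (degLT_mono hFree n.le_succ
      (alpha_pow_succ_mul_iota_sub_mem_degLT hFree hOre r n))
      (nsmul_mem (iota_mul_pow_mem_degLT hFree (δ r) n) (n + 1))

lemma mul_iota_mem_degLT (r : R) {n : ℕ} {t : T} (ht : t ∈ degLT hFree n) :
    t * ι r ∈ degLT hFree n := by
  induction n generalizing t with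
  | zero => simp [(AddSubgroup.mem_bot).1 (degLT_zero hFree ▸ ht)]
  | succ n ih =>
    have hlow := (sub_iota_mul_pow_mem_degLT_iff hFree (x := coeff hFree t n)).2 ⟨ht, rfl⟩
    have htop : α ^ n * ι r ∈ degLT hFree (n + 1) := by
      simpa using add_mem (degLT_mono hFree n.le_succ
        (alpha_pow_mul_iota_sub_mem_degLT hFree hOre r n)) (iota_mul_pow_mem_degLT hFree r n)
    simpa [sub_mul, mul_assoc] using
      add_mem (degLT_mono hFree n.le_succ (ih hlow))
        (iota_mul_mem_degLT hFree (coeff hFree t n) htop)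

lemma mul_iota_sub_iota_mul_mem_degLT (r : R) {n : ℕ} {t : T} (ht : t ∈ degLT hFree n) :
    t * ι r - ι r * t ∈ degLT hFree n :=
  sub_mem (mul_iota_mem_degLT hFree hOre r ht) (iota_mul_mem_degLT hFree r ht)

lemma mul_iota_sub_iota_mul_sub_mem_degLT {m : ℕ} {p : T} {b : R}
    (hp : p - α ^ (m + 1) - ι b * α ^ m ∈ degLT hFree m) (r : R) :
    p * ι r - ι r * p - ι ((m + 1) • δ r + (b * r - r * b)) * α ^ m ∈ degLT hFree m := by
  obtain ⟨e, he, rfl⟩ : ∃ e ∈ degLT hFree m, p = α ^ (m + 1) + ι b * α ^ m + e :=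
    ⟨_, hp, by abel⟩
  convert add_mem (add_mem (alpha_pow_succ_mul_iota_sub_mem_degLT hFree hOre r m)
    (iota_mul_mem_degLT hFree b (alpha_pow_mul_iota_sub_mem_degLT hFree hOre r m)))
    (mul_iota_sub_iota_mul_mem_degLT hFree hOre r he) using 1
  simp only [map_add, map_nsmul, map_sub, map_mul, add_mul, sub_mul, mul_add, mul_sub,
    smul_mul_assoc, mul_assoc]
  abel

/-- `t - ι x * α ^ n ∈ degLT hFree n` says that `t` has degree `≤ n` and coefficient `x` at
`α ^ n`. -/
def leadingCoeffIdeal (J : TwoSidedIdeal T) (n : ℕ) : TwoSidedIdeal R :=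
  .mk' {x | ∃ t ∈ J, t - ι x * α ^ n ∈ degLT hFree n}
    ⟨0, J.zero_mem, by simp⟩
    (fun {_ _} ⟨s, hsJ, hs⟩ ⟨t, htJ, ht⟩ => ⟨s + t, J.add_mem hsJ htJ, by
      convert add_mem hs ht using 1
      rw [map_add, add_mul]
      abel⟩)
    (fun {_} ⟨t, htJ, ht⟩ => ⟨-t, J.neg_mem htJ, by
      convert neg_mem ht using 1
      rw [map_neg, neg_mul]
      abel⟩)
    (fun {x _} ⟨t, htJ, ht⟩ => ⟨ι x * t, J.mul_mem_left _ _ htJ, by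
      simpa [mul_sub, mul_assoc] using iota_mul_mem_degLT hFree x ht⟩)
    (fun {x y} ⟨t, htJ, ht⟩ => ⟨t * ι y, J.mul_mem_right _ _ htJ, by
      convert add_mem (mul_iota_mem_degLT hFree hOre y ht)
        (iota_mul_mem_degLT hFree x (alpha_pow_mul_iota_sub_mem_degLT hFree hOre y n)) using 1
      simp only [map_mul, sub_mul, mul_sub, mul_assoc]
      abel⟩)

variable {J : TwoSidedIdeal T}

lemma mem_leadingCoeffIdeal {n : ℕ} {x : R} :
    x ∈ leadingCoeffIdeal hFree hOre J n ↔ ∃ t ∈ J, t - ι x * α ^ n ∈ degLT hFree n :=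
  TwoSidedIdeal.mem_mk' ..

lemma delta_mem_leadingCoeffIdeal {n : ℕ} {x : R}
    (hx : x ∈ leadingCoeffIdeal hFree hOre J n) :
    δ x ∈ leadingCoeffIdeal hFree hOre J n := by
  obtain ⟨t, htJ, ht⟩ := (mem_leadingCoeffIdeal hFree hOre).1 hx
  refine (mem_leadingCoeffIdeal hFree hOre).2
    ⟨α * t - t * α, J.sub_mem (J.mul_mem_left _ _ htJ) (J.mul_mem_right _ _ htJ), ?_⟩
  convert alpha_mul_sub_mem_degLT hFree hOre ht using 1
  rw [mul_sub, sub_mul, alpha_mul_iota_mul_pow hOre, mul_assoc, ← pow_succ]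
  abel

lemma leadingCoeffIdeal_ne_bot {n : ℕ} {t : T} (htJ : t ∈ J) (ht : t ∈ degLT hFree (n + 1))
    (ht0 : t ≠ 0) (hmin : ∀ s ∈ J, s ∈ degLT hFree n → s = 0) :
    leadingCoeffIdeal hFree hOre J n ≠ ⊥ := by
  intro hbot
  have hlow := (sub_iota_mul_pow_mem_degLT_iff hFree (x := coeff hFree t n)).2 ⟨ht, rfl⟩
  have hx := (mem_leadingCoeffIdeal hFree hOre).2 ⟨t, htJ, hlow⟩
  rw [hbot, TwoSidedIdeal.mem_bot] at hx
  rw [hx, map_zero, zero_mul, sub_zero] at hlow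
  exact ht0 (hmin t htJ hlow)

lemma exists_nsmul_delta_eq {m : ℕ} {p : T}
    (hmin : ∀ s ∈ J, s ∈ degLT hFree (m + 1) → s = 0) (hpJ : p ∈ J)
    (hp : p - α ^ (m + 1) ∈ degLT hFree (m + 1)) :
    ∃ b, ∀ r, (m + 1) • δ r = r * b - b * r := by
  set b := coeff hFree (p - α ^ (m + 1)) m
  refine ⟨b, fun r => ?_⟩
  have hcomm := mul_iota_sub_iota_mul_sub_mem_degLT hFree hOre
    ((sub_iota_mul_pow_mem_degLT_iff hFree (x := b)).2 ⟨hp, rfl⟩) r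
  have hq : p * ι r - ι r * p ∈ degLT hFree (m + 1) := by
    simpa only [sub_add_cancel] using add_mem (degLT_mono hFree m.le_succ hcomm)
      (iota_mul_pow_mem_degLT hFree ((m + 1) • δ r + (b * r - r * b)) m)
  rw [hmin _ (J.sub_mem (J.mul_mem_right _ _ hpJ) (J.mul_mem_left _ _ hpJ)) hq] at hcomm
  have h0 := ((sub_iota_mul_pow_mem_degLT_iff hFree).1 hcomm).2
  rw [map_zero, Finsupp.zero_apply] at h0
  rw [eq_neg_of_add_eq_zero_left h0.symm, neg_sub]

end DiffOpRing

lemma exists_eq_mul_sub_mul_of_nsmul_eq {R : Type*} [Ring R] [Algebra ℚ R] {δ : R → R}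
    {n : ℕ} (hn : n ≠ 0) {b : R} (h : ∀ r, n • δ r = r * b - b * r) :
    ∃ a, ∀ r, δ r = a * r - r * a := by
  refine ⟨-((n : ℚ)⁻¹ • b), fun r => ?_⟩
  have hn' : (n : ℚ) ≠ 0 := Nat.cast_ne_zero.2 hn
  calc δ r = (n : ℚ)⁻¹ • (n • δ r) := by
        rw [← Nat.cast_smul_eq_nsmul ℚ, smul_smul, inv_mul_cancel₀ hn', one_smul]
    _ = _ := by
        rw [h, smul_sub, neg_mul, mul_neg, mul_smul_comm, smul_mul_assoc]
        abel

open DiffOpRing in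
theorem diff_op_ring_simple_general {R : Type*} [Ring R] [Algebra ℚ R]
    (δ : R →+ R)
    (T : Type*) [Ring T] (ι : R →+* T) (α : T)
    (hOre : ∀ r : R, α * ι r = ι r * α + ι (δ r))
    (hFree : ∀ t : T, ∃! f : ℕ →₀ R, t = f.sum fun n r => ι r * α ^ n)
    (hNotInner : ¬ ∃ a : R, ∀ r : R, δ r = a * r - r * a)
    (hNoInv : ∀ I : TwoSidedIdeal R, (∀ x ∈ I, δ x ∈ I) → I = ⊥ ∨ I = ⊤) :
    ∀ J : TwoSidedIdeal T, J = ⊥ ∨ J = ⊤ := by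
  refine fun J => or_iff_not_imp_left.2 fun hJ => ?_
  obtain ⟨n, ⟨t, htJ, ht, ht0⟩, hmin⟩ := exists_minimal_degLT hFree hJ
  have hI : leadingCoeffIdeal hFree hOre J n = ⊤ :=
    (hNoInv _ fun _ => delta_mem_leadingCoeffIdeal hFree hOre).resolve_left
      (leadingCoeffIdeal_ne_bot hFree hOre htJ ht ht0 hmin)
  obtain ⟨p, hpJ, hp⟩ :=
    (mem_leadingCoeffIdeal hFree hOre).1 (hI ▸ TwoSidedIdeal.mem_top (x := 1))
  rw [map_one, one_mul] at hp
  cases n with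
  | zero =>
    rw [degLT_zero, AddSubgroup.mem_bot, pow_zero, sub_eq_zero] at hp
    exact J.eq_top (hp ▸ hpJ)
  | succ m =>
    obtain ⟨b, hb⟩ := exists_nsmul_delta_eq hFree hOre hmin hpJ hp
    exact absurd (exists_eq_mul_sub_mul_of_nsmul_eq m.succ_ne_zero hb) hNotInner

/-- Let `R` be a noetherian ℚ-algebra (characteristic `0`), `δ` a derivation of `R`,
and `T = R[α; δ]` the differential operator ring (encoded by a ring embedding
`ι : R →+* T` and an element `α` with `α·ιr = ιr·α + ι(δ r)`, such that `T` is free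
as a left `R`-module on the powers of `α`).  If `δ` is not inner and `R` has no
proper nonzero `δ`-invariant two-sided ideal, then `T` is a simple ring. -/
theorem diff_op_ring_simple {R : Type*} [Ring R] [Algebra ℚ R] [IsNoetherianRing R]
    (δ : R →+ R) (hLeib : ∀ a b : R, δ (a * b) = a * δ b + δ a * b)
    (T : Type*) [Ring T] (ι : R →+* T) (hι : Function.Injective ι) (α : T)
    (hOre : ∀ r : R, α * ι r = ι r * α + ι (δ r))
    (hFree : ∀ t : T, ∃! f : ℕ →₀ R, t = f.sum fun n r => ι r * α ^ n)
    (hNotInner : ¬ ∃ a : R, ∀ r : R, δ r = a * r - r * a)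
    (hNoInv : ∀ I : TwoSidedIdeal R, (∀ x ∈ I, δ x ∈ I) → I = ⊥ ∨ I = ⊤) :
    ∀ J : TwoSidedIdeal T, J = ⊥ ∨ J = ⊤ :=
  diff_op_ring_simple_general δ T ι α hOre hFree hNotInner hNoInv
end

section
/- Let T = S[v;σ,δ] be an Ore extension of a noetherian ring S, and let P be a prime ideal of T. Then P ∩ S need not be prime in general, but if σ = id then P ∩ S is a δ-invariant ideal of S; moreover in characteristic 0, for T = S[v;δ] a differential operator ring over a noetherian ℚ-algebra S, the contraction Q ∩ S of any prime Q of T is a δ-invariant prime ideal of S. -/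
/-!
The identity `v ι(s) - ι(s) v = ι(δ s)` makes `I = Q ∩ S` stable under `δ`. As `T` is spanned
over `S` by the powers of `v`, and `v ^ n ι(b)` lies in the right ideal generated by the
`ι(δ^k b)`, primeness of `Q` makes `I` δ-prime: if `A`, `B` are ideals of `S` with `B`
δ-stable and `AB ⊆ I`, then `ι(A) T ι(B) ⊆ Q`, so `A ⊆ I` or `B ⊆ I`.

In a noetherian ℚ-algebra δ-prime ideals are prime. For a prime `P`, the largest δ-stable ideal
`P^# = {s | ∀ n, δ^n s ∈ P}` is prime: take `m`, `n` minimal with `δ^m a ∉ P`, `δ^n b ∉ P`;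
modulo `P` the Leibniz expansion of `δ^(m+n) (a r b)` reduces to `(m+n choose m) δ^m a r δ^n b`,
and the binomial coefficient is invertible. A noetherian induction, splitting a non-prime `J`
as `AB ⊆ J` with `A, B ⊋ J`, then produces a prime `P ⊇ I` with `P^# ⊆ I`, so `I = P^#`.
-/

open Finset

namespace AddMonoid.End

variable {R : Type*} [Ring R] (δ : AddMonoid.End R)

lemma pow_succ_apply' (n : ℕ) (x : R) : (δ ^ (n + 1)) x = δ ((δ ^ n) x) := by
  rw [pow_succ', coe_mul, Function.comp_apply]

theorem pow_apply_mul_eq_sum_antidiagonal (hδ : ∀ a b : R, δ (a * b) = a * δ b + δ a * b)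
    (n : ℕ) (a b : R) :
    (δ ^ n) (a * b) = ∑ ij ∈ antidiagonal n, n.choose ij.1 • ((δ ^ ij.1) a * (δ ^ ij.2) b) := by
  induction n with
  | zero => simp
  | succ n ih =>
    have hsymm : ∑ ij ∈ antidiagonal n, n.choose ij.1 • ((δ ^ (ij.1 + 1)) a * (δ ^ ij.2) b) =
        ∑ ij ∈ antidiagonal n, n.choose ij.2 • ((δ ^ (ij.1 + 1)) a * (δ ^ ij.2) b) :=
      sum_congr rfl fun ij hij => by rw [Nat.choose_symm_of_eq_add (mem_antidiagonal.1 hij).symm]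
    rw [sum_antidiagonal_choose_succ_nsmul (fun i j => (δ ^ i) a * (δ ^ j) b),
      pow_succ_apply', ih, map_sum, ← hsymm, ← sum_add_distrib]
    refine sum_congr rfl fun ij _ => ?_
    simp only [map_nsmul, hδ, pow_succ_apply', smul_add]

end AddMonoid.End

namespace TwoSidedIdeal

variable {R : Type*} [Ring R]

/-- Primeness in the noncommutative sense; `Ideal.IsPrime` is complete primality. -/
def IsPrime (P : TwoSidedIdeal R) : Prop :=
  P ≠ ⊤ ∧ ∀ a b : R, (∀ r : R, a * r * b ∈ P) → a ∈ P ∨ b ∈ P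

instance [IsNoetherianRing R] : WellFoundedGT (TwoSidedIdeal R) :=
  ((OrderEmbedding.subtype _).strictMono.comp orderIsoIsTwoSided.strictMono).wellFoundedGT

lemma mem_of_nsmul_mem [Algebra ℚ R] (P : TwoSidedIdeal R) {n : ℕ} (hn : n ≠ 0) {x : R}
    (h : n • x ∈ P) : x ∈ P := by
  have hx : x = algebraMap ℚ R (n : ℚ)⁻¹ * (n • x) := by
    rw [← Algebra.smul_def, ← Nat.cast_smul_eq_nsmul ℚ, smul_smul,
      inv_mul_cancel₀ (Nat.cast_ne_zero.2 hn), one_smul]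
  rw [hx]
  exact P.mul_mem_left _ _ h

lemma exists_lt_lt_of_not_isPrime {J : TwoSidedIdeal R} (hJ : J ≠ ⊤) (hJ' : ¬J.IsPrime) :
    ∃ A B : TwoSidedIdeal R, J < A ∧ J < B ∧ ∀ x ∈ A, ∀ y ∈ B, x * y ∈ J := by
  obtain ⟨a, b, hab, ha, hb⟩ : ∃ a b : R, (∀ r, a * r * b ∈ J) ∧ a ∉ J ∧ b ∉ J := by
    simpa [IsPrime, hJ] using hJ'
  let A : TwoSidedIdeal R := .mk' {x | ∀ r, x * r * b ∈ J}
    (fun r => by simp)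
    (fun hx hy r => by simpa [add_mul] using J.add_mem (hx r) (hy r))
    (fun hx r => by simpa using J.neg_mem (hx r))
    (fun {x y} hy r => by simpa [mul_assoc] using J.mul_mem_left x _ (hy r))
    (fun {x y} hx r => by simpa [mul_assoc] using hx (y * r))
  let B : TwoSidedIdeal R := .mk' {y | ∀ x ∈ A, x * y ∈ J}
    (fun x _ => by simp)
    (fun hy hz x hx => by simpa [mul_add] using J.add_mem (hy x hx) (hz x hx))
    (fun hy x hx => by simpa using J.neg_mem (hy x hx))
    (fun {y z} hz x hx => by simpa [mul_assoc] using hz (x * y) (A.mul_mem_right x y hx))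
    (fun {y z} hy x hx => by simpa [mul_assoc] using J.mul_mem_right _ z (hy x hx))
  have mem_A {x : R} : x ∈ A ↔ ∀ r, x * r * b ∈ J := mem_mk' ..
  have mem_B {y : R} : y ∈ B ↔ ∀ x ∈ A, x * y ∈ J := mem_mk' ..
  have hJA : J ≤ A := fun x hx => mem_A.2 fun r => J.mul_mem_right _ _ (J.mul_mem_right _ _ hx)
  have hJB : J ≤ B := fun y hy => mem_B.2 fun x _ => J.mul_mem_left _ _ hy
  have haA : a ∈ A := mem_A.2 hab
  have hbB : b ∈ B := mem_B.2 fun x hx => by simpa using mem_A.1 hx 1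
  exact ⟨A, B, lt_of_le_not_ge hJA fun h => ha (h haA),
    lt_of_le_not_ge hJB fun h => hb (h hbB), fun x hx y hy => mem_B.1 hy x hx⟩

section Derivation

variable (δ : AddMonoid.End R)

structure IsDerivPrime (I : TwoSidedIdeal R) : Prop where
  ne_top : I ≠ ⊤
  mapsTo : Set.MapsTo δ I I
  le_or_le : ∀ A B : TwoSidedIdeal R, Set.MapsTo δ A A → Set.MapsTo δ B B →
    (∀ a ∈ A, ∀ b ∈ B, a * b ∈ I) → A ≤ I ∨ B ≤ I

variable (hδ : ∀ a b : R, δ (a * b) = a * δ b + δ a * b)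
include hδ

lemma pow_apply_mul_sub_choose_smul_mem {P : TwoSidedIdeal R} {m n : ℕ} {a b : R}
    (ha : ∀ k < m, (δ ^ k) a ∈ P) (hb : ∀ k < n, (δ ^ k) b ∈ P) :
    (δ ^ (m + n)) (a * b) - (m + n).choose m • ((δ ^ m) a * (δ ^ n) b) ∈ P := by
  have hmn : (m, n) ∈ antidiagonal (m + n) := mem_antidiagonal.2 rfl
  rw [δ.pow_apply_mul_eq_sum_antidiagonal hδ, ← add_sum_erase _ _ hmn, add_sub_cancel_left]
  refine P.finsetSum_mem _ _ fun ij hij => ?_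
  obtain ⟨hne, hij⟩ := mem_erase.1 hij
  rw [HasAntidiagonal.mem_antidiagonal] at hij
  rw [nsmul_eq_mul]
  rcases lt_or_ge ij.1 m with hi | hi
  · exact P.mul_mem_left _ _ (P.mul_mem_right _ _ (ha _ hi))
  · have hj : ij.2 < n := by
      by_contra! hj
      exact hne (Prod.ext (by omega) (by omega))
    exact P.mul_mem_left _ _ (P.mul_mem_left _ _ (hb _ hj))

/-- The ideal written `P^#` in the literature. -/
def derivCore (P : TwoSidedIdeal R) : TwoSidedIdeal R :=
  .mk' {s | ∀ n, (δ ^ n) s ∈ P}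
    (fun n => by simp)
    (fun hx hy n => by simpa using P.add_mem (hx n) (hy n))
    (fun hx n => by simpa using P.neg_mem (hx n))
    (fun {x y} hy n => by
      rw [δ.pow_apply_mul_eq_sum_antidiagonal hδ]
      exact P.finsetSum_mem _ _ fun ij _ => by
        rw [nsmul_eq_mul]; exact P.mul_mem_left _ _ (P.mul_mem_left _ _ (hy _)))
    (fun {x y} hx n => by
      rw [δ.pow_apply_mul_eq_sum_antidiagonal hδ]
      exact P.finsetSum_mem _ _ fun ij _ => by
        rw [nsmul_eq_mul]; exact P.mul_mem_left _ _ (P.mul_mem_right _ _ (hx _)))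

variable {δ hδ}

lemma mem_derivCore {P : TwoSidedIdeal R} {s : R} :
    s ∈ derivCore δ hδ P ↔ ∀ n, (δ ^ n) s ∈ P :=
  mem_mk' ..

lemma derivCore_le (P : TwoSidedIdeal R) : derivCore δ hδ P ≤ P :=
  fun s hs => by simpa using mem_derivCore.1 hs 0

lemma mapsTo_derivCore (P : TwoSidedIdeal R) :
    Set.MapsTo δ (derivCore δ hδ P) (derivCore δ hδ P) := fun s hs =>
  mem_derivCore.2 fun n => by
    simpa only [pow_succ, AddMonoid.End.coe_mul, Function.comp_apply] using
      mem_derivCore.1 hs (n + 1)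

lemma le_derivCore {J P : TwoSidedIdeal R} (hJP : J ≤ P) (hJ : Set.MapsTo δ J J) :
    J ≤ derivCore δ hδ P := fun s hs =>
  mem_derivCore.2 fun n => hJP (by simpa using hJ.iterate n hs)

lemma derivCore_top : derivCore δ hδ ⊤ = ⊤ :=
  top_le_iff.1 (le_derivCore le_rfl fun _ _ => mem_top R)

lemma mul_mem_derivCore {A B J : TwoSidedIdeal R} (hAB : ∀ x ∈ A, ∀ y ∈ B, x * y ∈ J) {x y : R}
    (hx : x ∈ derivCore δ hδ A) (hy : y ∈ derivCore δ hδ B) : x * y ∈ derivCore δ hδ J :=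
  mem_derivCore.2 fun n => by
    rw [δ.pow_apply_mul_eq_sum_antidiagonal hδ]
    exact J.finsetSum_mem _ _ fun ij _ => by
      rw [nsmul_eq_mul]
      exact J.mul_mem_left _ _ (hAB _ (mem_derivCore.1 hx _) _ (mem_derivCore.1 hy _))

variable (hδ) in
theorem IsPrime.derivCore [Algebra ℚ R] {P : TwoSidedIdeal R} (hP : P.IsPrime) :
    (derivCore δ hδ P).IsPrime := by
  refine ⟨fun h => hP.1 (top_le_iff.1 (h ▸ derivCore_le P)), fun a b hab => ?_⟩
  by_contra! hcon
  obtain ⟨ha, hb⟩ := hcon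
  simp only [mem_derivCore, not_forall] at ha hb
  classical
  obtain ⟨m, ham, ha_lt⟩ : ∃ m, (δ ^ m) a ∉ P ∧ ∀ k < m, (δ ^ k) a ∈ P :=
    ⟨Nat.find ha, Nat.find_spec ha, fun k hk => not_not.1 (Nat.find_min ha hk)⟩
  obtain ⟨n, hbn, hb_lt⟩ : ∃ n, (δ ^ n) b ∉ P ∧ ∀ k < n, (δ ^ k) b ∈ P :=
    ⟨Nat.find hb, Nat.find_spec hb, fun k hk => not_not.1 (Nat.find_min hb hk)⟩
  have hrb : ∀ r, ∀ k ≤ n, (δ ^ k) (r * b) - r * (δ ^ k) b ∈ P := fun r k hk => by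
    simpa using pow_apply_mul_sub_choose_smul_mem δ hδ (m := 0) (a := r)
      (fun _ h => absurd h (Nat.not_lt_zero _)) fun j hj => hb_lt j (by omega)
  have hrb_lt : ∀ r, ∀ k < n, (δ ^ k) (r * b) ∈ P := fun r k hk => by
    simpa using P.add_mem (hrb r k hk.le) (P.mul_mem_left r _ (hb_lt k hk))
  have hmain : ∀ r, (δ ^ m) a * r * (δ ^ n) b ∈ P := fun r => by
    have h1 : (δ ^ m) a * (δ ^ n) (r * b) ∈ P := by
      refine P.mem_of_nsmul_mem (Nat.choose_pos (Nat.le_add_right m n)).ne' ?_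
      have h2 : (δ ^ (m + n)) (a * (r * b)) ∈ P := by
        rw [← mul_assoc]; exact mem_derivCore.1 (hab r) _
      simpa using P.sub_mem h2 (pow_apply_mul_sub_choose_smul_mem δ hδ ha_lt (hrb_lt r))
    have := P.sub_mem h1 (P.mul_mem_left ((δ ^ m) a) _ (hrb r n le_rfl))
    rwa [← mul_sub, sub_sub_cancel, ← mul_assoc] at this
  exact (hP.2 _ _ hmain).elim ham hbn

lemma IsDerivPrime.exists_isPrime_derivCore_le [IsNoetherianRing R] {I : TwoSidedIdeal R}
    (hI : IsDerivPrime δ I) (J : TwoSidedIdeal R) (hJ : derivCore δ hδ J ≤ I) :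
    ∃ P, J ≤ P ∧ P.IsPrime ∧ derivCore δ hδ P ≤ I := by
  induction J using WellFoundedGT.induction with
  | _ J ih =>
  by_cases hJ_prime : J.IsPrime
  · exact ⟨J, le_rfl, hJ_prime, hJ⟩
  have hJ_top : J ≠ ⊤ := by
    rintro rfl
    rw [derivCore_top, top_le_iff] at hJ
    exact hI.ne_top hJ
  obtain ⟨A, B, hJA, hJB, hAB⟩ := exists_lt_lt_of_not_isPrime hJ_top hJ_prime
  rcases hI.le_or_le _ _ (mapsTo_derivCore A) (mapsTo_derivCore B)
      fun x hx y hy => hJ (mul_mem_derivCore hAB hx hy) with hA | hB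
  · obtain ⟨P, hAP, hP, hPI⟩ := ih A hJA hA
    exact ⟨P, hJA.le.trans hAP, hP, hPI⟩
  · obtain ⟨P, hBP, hP, hPI⟩ := ih B hJB hB
    exact ⟨P, hJB.le.trans hBP, hP, hPI⟩

variable (hδ) in
theorem IsDerivPrime.isPrime [IsNoetherianRing R] [Algebra ℚ R] {I : TwoSidedIdeal R}
    (hI : IsDerivPrime δ I) : I.IsPrime := by
  have hI_core : derivCore δ hδ I = I :=
    le_antisymm (derivCore_le I) (le_derivCore le_rfl hI.mapsTo)
  obtain ⟨P, hIP, hP, hPI⟩ := hI.exists_isPrime_derivCore_le I hI_core.le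
  exact le_antisymm hPI (le_derivCore hIP hI.mapsTo) ▸ hP.derivCore hδ

end Derivation

section OreExtension

variable {S T : Type*} [Ring S] [Ring T] (δ : AddMonoid.End S) (ι : S →+* T) (v : T)
  (hOre : ∀ s, v * ι s = ι s * v + ι (δ s))
include hOre

lemma mapsTo_comap (Q : TwoSidedIdeal T) : Set.MapsTo δ (Q.comap ι) (Q.comap ι) := fun s hs => by
  rw [SetLike.mem_coe, mem_comap] at hs ⊢
  have := Q.sub_mem (Q.mul_mem_left v _ hs) (Q.mul_mem_right _ v hs)
  rwa [hOre, add_sub_cancel_left] at this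

lemma mul_pow_mul_mem {Q : TwoSidedIdeal T} {B : Set S} (hB : Set.MapsTo δ B B) {c : T}
    (hc : ∀ y ∈ B, c * ι y ∈ Q) (n : ℕ) : ∀ x ∈ B, c * (v ^ n * ι x) ∈ Q := by
  induction n with
  | zero => simpa using hc
  | succ n ih =>
    intro x hx
    have h : c * (v ^ (n + 1) * ι x) = c * (v ^ n * ι x) * v + c * (v ^ n * ι (δ x)) := by
      rw [pow_succ, mul_assoc, hOre]; noncomm_ring
    rw [h]
    exact Q.add_mem (Q.mul_mem_right _ _ (ih x hx)) (ih _ (hB hx))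

lemma isDerivPrime_comap (hspan : ∀ t : T, ∃ f : ℕ →₀ S, t = f.sum fun n s => ι s * v ^ n)
    {Q : TwoSidedIdeal T} (hQ : Q.IsPrime) : IsDerivPrime δ (Q.comap ι) where
  ne_top := by
    rw [Ne, ← one_mem_iff, mem_comap, map_one, one_mem_iff]
    exact hQ.1
  mapsTo := mapsTo_comap δ ι v hOre Q
  le_or_le A B _ hB hAB := by
    by_contra! h
    obtain ⟨a, ha, haQ⟩ := SetLike.not_le_iff_exists.1 h.1
    obtain ⟨b, hb, hbQ⟩ := SetLike.not_le_iff_exists.1 h.2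
    rw [mem_comap] at haQ hbQ
    refine (hQ.2 (ι a) (ι b) fun t => ?_).elim haQ hbQ
    obtain ⟨f, rfl⟩ := hspan t
    rw [Finsupp.sum, mul_sum, sum_mul]
    refine Q.finsetSum_mem _ _ fun n _ => ?_
    rw [show ι a * (ι (f n) * v ^ n) * ι b = ι (a * f n) * (v ^ n * ι b) by simp [mul_assoc]]
    refine mul_pow_mul_mem δ ι v hOre hB (fun y hy => ?_) n b hb
    rw [← map_mul, ← mem_comap]
    exact hAB _ (A.mul_mem_right _ _ ha) y hy

end OreExtension

end TwoSidedIdeal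

theorem contraction_of_prime_in_diff_op_ring_general {S : Type*} [Ring S] [Algebra ℚ S]
    [IsNoetherianRing S]
    (δ : S →+ S) (hLeib : ∀ a b : S, δ (a * b) = a * δ b + δ a * b)
    (T : Type*) [Ring T] (ι : S →+* T)
    (v : T) (hOre : ∀ s : S, v * ι s = ι s * v + ι (δ s))
    (hFree : ∀ t : T, ∃! f : ℕ →₀ S, t = f.sum fun n s => ι s * v ^ n)
    (Q : TwoSidedIdeal T) (hQproper : Q ≠ ⊤)
    (hQprime : ∀ a b : T, (∀ r : T, a * r * b ∈ Q) → a ∈ Q ∨ b ∈ Q) :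
    (∀ s : S, ι s ∈ Q → ι (δ s) ∈ Q) ∧
    (∃ s : S, ι s ∉ Q) ∧
    (∀ a b : S, (∀ r : S, ι (a * r * b) ∈ Q) → ι a ∈ Q ∨ ι b ∈ Q) := by
  have hI : TwoSidedIdeal.IsDerivPrime δ (Q.comap ι) :=
    TwoSidedIdeal.isDerivPrime_comap δ ι v hOre (fun t => (hFree t).exists) ⟨hQproper, hQprime⟩
  have hI_prime := hI.isPrime hLeib
  refine ⟨fun s hs => ?_, ⟨1, ?_⟩, fun a b hab => ?_⟩
  · exact (TwoSidedIdeal.mem_comap ι).1 (hI.mapsTo ((TwoSidedIdeal.mem_comap ι).2 hs))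
  · rw [map_one, TwoSidedIdeal.one_mem_iff]; exact hQproper
  · exact (hI_prime.2 a b fun r => (TwoSidedIdeal.mem_comap ι).2 (hab r)).imp
      (TwoSidedIdeal.mem_comap ι).1 (TwoSidedIdeal.mem_comap ι).1

/-- Let `S` be a noetherian ℚ-algebra, `δ` a derivation of `S`, and
`T = S[v;δ]` the differential operator ring (encoded by `ι : S →+* T` and `v` with
`v·ιs = ιs·v + ι(δs)`, `T` free as a left `S`-module on the powers of `v`).
Then for any prime (two-sided) ideal `Q` of `T`, the contraction `Q ∩ S` is a
`δ`-invariant prime ideal of `S`. -/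
theorem contraction_of_prime_in_diff_op_ring {S : Type*} [Ring S] [Algebra ℚ S]
    [IsNoetherianRing S]
    (δ : S →+ S) (hLeib : ∀ a b : S, δ (a * b) = a * δ b + δ a * b)
    (T : Type*) [Ring T] (ι : S →+* T) (hι : Function.Injective ι)
    (v : T) (hOre : ∀ s : S, v * ι s = ι s * v + ι (δ s))
    (hFree : ∀ t : T, ∃! f : ℕ →₀ S, t = f.sum fun n s => ι s * v ^ n)
    (Q : TwoSidedIdeal T) (hQproper : Q ≠ ⊤)
    (hQprime : ∀ a b : T, (∀ r : T, a * r * b ∈ Q) → a ∈ Q ∨ b ∈ Q) :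
    (∀ s : S, ι s ∈ Q → ι (δ s) ∈ Q) ∧
    (∃ s : S, ι s ∉ Q) ∧
    (∀ a b : S, (∀ r : S, ι (a * r * b) ∈ Q) → ι a ∈ Q ∨ ι b ∈ Q) :=
  contraction_of_prime_in_diff_op_ring_general δ hLeib T ι v hOre hFree Q hQproper hQprime
end

section
/- In the algebra D (the Drinfeld double of the Jordan plane), the automorphism σ defined by σ(y) = y + (1/2)x, σ(v) = v - (1/2)u (fixing x, u, g, ζ) satisfies σ² = conjugation by g, i.e., σ²(a) = g a g⁻¹ for all a ∈ D. -/
namespace DrinfeldDoubleJordan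

variable (k : Type*) [Field k]

/-- Generators of the free algebra: `0 = x`, `1 = y`, `2 = g`, `3 = g⁻¹`,
`4 = u`, `5 = v`, `6 = ζ`. -/
noncomputable abbrev X : FreeAlgebra k (Fin 7) := FreeAlgebra.ι k 0
noncomputable abbrev Y : FreeAlgebra k (Fin 7) := FreeAlgebra.ι k 1
noncomputable abbrev G : FreeAlgebra k (Fin 7) := FreeAlgebra.ι k 2
noncomputable abbrev G' : FreeAlgebra k (Fin 7) := FreeAlgebra.ι k 3
noncomputable abbrev U : FreeAlgebra k (Fin 7) := FreeAlgebra.ι k 4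
noncomputable abbrev V : FreeAlgebra k (Fin 7) := FreeAlgebra.ι k 5
noncomputable abbrev Z : FreeAlgebra k (Fin 7) := FreeAlgebra.ι k 6

/-- The defining relations of the Drinfeld double `D` of the Jordan plane:
`[y,x] = -(1/2)x²`, `gg⁻¹ = g⁻¹g = 1`, `gxg⁻¹ = x`, `gyg⁻¹ = y+x`,
`[u,v] = (1/2)u²`, `[ζ,v] = -v`, `[ζ,u] = -u`, `[u,y] = 1-g`,
`[v,x] = 1-g+xu`, `[v,y] = yu - gζ`, `[v,g] = gu`, `[ζ,y] = y`, `[ζ,x] = x`,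
`[x,u] = [x,g] = [u,g] = [ζ,g] = 0`. -/
inductive DRel : FreeAlgebra k (Fin 7) → FreeAlgebra k (Fin 7) → Prop
  | yx : DRel (Y k * X k) (X k * Y k - (2⁻¹ : k) • (X k) ^ 2)
  | gg' : DRel (G k * G' k) 1
  | g'g : DRel (G' k * G k) 1
  | gy : DRel (G k * Y k) (Y k * G k + X k * G k)
  | uv : DRel (U k * V k) (V k * U k + (2⁻¹ : k) • (U k) ^ 2)
  | zv : DRel (Z k * V k) (V k * Z k - V k)
  | zu : DRel (Z k * U k) (U k * Z k - U k)
  | uy : DRel (U k * Y k) (Y k * U k + 1 - G k)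
  | vx : DRel (V k * X k) (X k * V k + 1 - G k + X k * U k)
  | vy : DRel (V k * Y k) (Y k * V k + Y k * U k - G k * Z k)
  | vg : DRel (V k * G k) (G k * V k + G k * U k)
  | zy : DRel (Z k * Y k) (Y k * Z k + Y k)
  | zx : DRel (Z k * X k) (X k * Z k + X k)
  | xu : DRel (X k * U k) (U k * X k)
  | xg : DRel (X k * G k) (G k * X k)
  | ug : DRel (U k * G k) (G k * U k)
  | zg : DRel (Z k * G k) (G k * Z k)

/-- The Drinfeld double `D` of the Jordan plane. -/
abbrev D := RingQuot (DRel k)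

noncomputable def x : D k := RingQuot.mkAlgHom k (DRel k) (X k)
noncomputable def y : D k := RingQuot.mkAlgHom k (DRel k) (Y k)
noncomputable def g : D k := RingQuot.mkAlgHom k (DRel k) (G k)
noncomputable def g' : D k := RingQuot.mkAlgHom k (DRel k) (G' k)
noncomputable def u : D k := RingQuot.mkAlgHom k (DRel k) (U k)
noncomputable def v : D k := RingQuot.mkAlgHom k (DRel k) (V k)
noncomputable def ζ : D k := RingQuot.mkAlgHom k (DRel k) (Z k)

/-- The normal element `q = ux + 2(1+g)`. -/
noncomputable def q : D k := u k * x k + 2 * (1 + g k)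

/-- The normal element `s = xv + uy + (-(1/2)ux + g - 1)ζ - 2(g+1)`. -/
noncomputable def s : D k :=
  x k * v k + u k * y k + (-((2⁻¹ : k) • (u k * x k)) + g k - 1) * ζ k -
    2 * (g k + 1)

end DrinfeldDoubleJordan

open DrinfeldDoubleJordan in
/-- In the Drinfeld double `D` of the Jordan plane, the algebra automorphism `σ`
defined by `σ(y) = y + (1/2)x`, `σ(v) = v - (1/2)u` (fixing `x`, `u`, `g`, `g⁻¹`,
`ζ`) satisfies `σ² = ` conjugation by `g`, i.e. `σ²(a) = g a g⁻¹` for all `a ∈ D`. -/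
theorem sigma_squared_is_conjugation_by_g (k : Type*) [Field k] [CharZero k]
    (σ : D k ≃ₐ[k] D k)
    (hx : σ (x k) = x k) (hu : σ (u k) = u k) (hg : σ (g k) = g k)
    (hg' : σ (g' k) = g' k) (hz : σ (ζ k) = ζ k)
    (hy : σ (y k) = y k + (2⁻¹ : k) • x k)
    (hv : σ (v k) = v k - (2⁻¹ : k) • u k) :
    ∀ a : D k, σ (σ a) = g k * a * g' k := by
  have rel : ∀ {a b : FreeAlgebra k (Fin 7)}, DRel k a b →
      RingQuot.mkAlgHom k (DRel k) a = RingQuot.mkAlgHom k (DRel k) b :=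
    fun h => RingQuot.mkAlgHom_rel k h
  have hgg' : g k * g' k = 1 := by
    simpa [g, g', map_mul, map_one] using rel (DRel.gg' (k := k))
  have hg'g : g' k * g k = 1 := by
    simpa [g, g', map_mul, map_one] using rel (DRel.g'g (k := k))
  have hxg : x k * g k = g k * x k := by
    simpa [x, g, map_mul] using rel (DRel.xg (k := k))
  have hug : u k * g k = g k * u k := by
    simpa [u, g, map_mul] using rel (DRel.ug (k := k))
  have hzg : ζ k * g k = g k * ζ k := by
    simpa [ζ, g, map_mul] using rel (DRel.zg (k := k))
  have hgy : g k * y k = y k * g k + x k * g k := by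
    simpa [x, y, g, map_mul, map_add] using rel (DRel.gy (k := k))
  have hvg : v k * g k = g k * v k + g k * u k := by
    simpa [v, u, g, map_mul, map_add] using rel (DRel.vg (k := k))
  have cx : g k * x k * g' k = x k := by rw [← hxg, mul_assoc, hgg', mul_one]
  have cu : g k * u k * g' k = u k := by rw [← hug, mul_assoc, hgg', mul_one]
  have cz : g k * ζ k * g' k = ζ k := by rw [← hzg, mul_assoc, hgg', mul_one]
  have cg : g k * g k * g' k = g k := by rw [mul_assoc, hgg', mul_one]
  have cg' : g k * g' k * g' k = g' k := by rw [hgg', one_mul]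
  have cy : g k * y k * g' k = y k + x k := by
    rw [hgy, add_mul, mul_assoc, mul_assoc, hgg', mul_one, mul_one]
  have cv : g k * v k * g' k = v k - u k := by
    have : g k * v k = v k * g k - g k * u k := by rw [hvg]; abel
    rw [this, sub_mul, mul_assoc (v k), hgg', mul_one, cu]
  intro a
  obtain ⟨b, rfl⟩ := RingQuot.mkAlgHom_surjective k (DRel k) a
  induction b using FreeAlgebra.induction with
  | grade0 r =>
    simp only [AlgHom.commutes, AlgEquiv.commutes]
    rw [← Algebra.commutes, mul_assoc, hgg', mul_one]
  | grade1 i =>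
    fin_cases i
    · show σ (σ (x k)) = g k * x k * g' k
      rw [hx, hx, cx]
    · show σ (σ (y k)) = g k * y k * g' k
      rw [hy, map_add, map_smul, hy, hx, cy]
      module
    · show σ (σ (g k)) = g k * g k * g' k
      rw [hg, hg, cg]
    · show σ (σ (g' k)) = g k * g' k * g' k
      rw [hg', hg', cg']
    · show σ (σ (u k)) = g k * u k * g' k
      rw [hu, hu, cu]
    · show σ (σ (v k)) = g k * v k * g' k
      rw [hv, map_sub, map_smul, hv, hu, cv]
      module
    · show σ (σ (ζ k)) = g k * ζ k * g' k
      rw [hz, hz, cz]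
  | mul a b ha hb =>
    rw [map_mul, map_mul, map_mul, ha, hb]
    simp only [mul_assoc]
    rw [← mul_assoc (g' k) (g k), hg'g, one_mul]
  | add a b ha hb =>
    rw [map_add, map_add, map_add, ha, hb, mul_add, add_mul]
end
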